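/- arXiv:1910.07020 — 6 statements merged into one kernel-verified Lean document; each statement's English description precedes it below -/
import Mathlib

section
/- Let L and k be natural numbers with k < L, and let M be a real number satisfying the equation M = 2^k + M - 2^L + 2^L * ((2^L - 1)/2^L)^M (where the powers are real powers, with the exponent M a real number). Then M = Real.log (1 - 2^(k - L : ℝ)) / Real.log (1 - 1/2^L), i.e., M is the logarithm of (1 - 2^(k-L)) to the base (1 - 1/2^L). -/
/-! The collision term `M - N + N (1 - 1/N)^M` cancels the `M` on both sides, leaving
`N (1 - 1/N)^M = N - 2^k`, i.e. `(1 - 1/N)^M = 1 - 2^(k-L)` with `N = 2^L`; since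
`L ≥ 1` the base `1 - 1/N` lies in `(0, 1)`, so `M` is the logarithm to that base. -/

open Real

theorem one_sub_inv_rpow_eq_of_collision_fixed_point {N c M : ℝ} (hN : N ≠ 0)
    (h : M = c + M - N + N * ((N - 1) / N) ^ M) :
    (1 - 1 / N) ^ M = 1 - c / N := by
  rw [← one_sub_div hN] at h
  rw [eq_sub_iff_add_eq, ← eq_sub_iff_add_eq', div_eq_iff hN]
  linarith

theorem eq_log_div_log_of_rpow_eq {b y M : ℝ} (hb₀ : 0 < b) (hb₁ : b ≠ 1) (h : b ^ M = y) :
    M = log y / log b := by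
  rw [log_div_log, ← h, logb_rpow hb₀ hb₁]

/-- Solving the fixed-point equation of collision-included probabilistic counting:
if `M = 2^k + M - 2^L + 2^L * ((2^L - 1)/2^L)^M` (real powers, exponent `M` real),
then `M` is the log of `1 - 2^(k-L)` to base `1 - 1/2^L`. -/
theorem cipc_fixed_point (L k : ℕ) (hk : k < L) (M : ℝ)
    (hM : M = 2 ^ k + M - 2 ^ L + 2 ^ L * (((2 : ℝ) ^ L - 1) / 2 ^ L) ^ M) :
    M = Real.log (1 - (2 : ℝ) ^ ((k : ℝ) - (L : ℝ))) / Real.log (1 - 1 / 2 ^ L) := by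
  have hN : (1 : ℝ) < 2 ^ L := one_lt_pow₀ one_lt_two (by omega)
  have hbase := one_sub_inv_rpow_eq_of_collision_fixed_point (by positivity) hM
  rw [rpow_sub two_pos, rpow_natCast, rpow_natCast]
  refine eq_log_div_log_of_rpow_eq ?_ ?_ hbase
  · rw [sub_pos, div_lt_one (by positivity)]
    exact hN
  · simp
end

section
/- Let N and M be natural numbers with N > 0. Then the sum, over all functions f : Fin M → Fin N, of the cardinality of the image of f (i.e., card (Finset.image f Finset.univ)) equals N * (N^M - (N-1)^M). Equivalently, if M values are drawn independently and uniformly at random from a set of size N, the expected number of distinct values obtained is N * (1 - ((N-1)/N)^M). -/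
/-!
Double counting: `∑ f, #(range f)` counts the pairs `(f, y)` with `y` in the range of `f`.
For a fixed `y`, the functions missing `y` are the functions into the complement of `{y}`,
so `y` is hit by `N ^ M - (N - 1) ^ M` of them.
-/

open Finset Fintype

section
variable {α β : Type*} [Fintype α] [DecidableEq α] [Fintype β] [DecidableEq β]

theorem card_filter_forall_ne (y : β) :
    #{f : α → β | ∀ x, f x ≠ y} = (card β - 1) ^ card α := by
  rw [← Fintype.card_subtype,
    Fintype.card_congr (Equiv.subtypePiEquivPi (p := fun _ b => b ≠ y)), Fintype.card_fun]
  simp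

theorem card_filter_mem_image (y : β) :
    #{f : α → β | y ∈ image f univ} = card β ^ card α - (card β - 1) ^ card α := by
  have hmiss : (univ.filter fun f : α → β => y ∈ image f univ) =
      (univ.filter fun f => ∀ x, f x ≠ y)ᶜ := by
    ext f; simp
  rw [hmiss, card_compl, card_filter_forall_ne, Fintype.card_fun]

theorem sum_card_image_univ :
    ∑ f : α → β, #(image f univ) = card β * (card β ^ card α - (card β - 1) ^ card α) :=
  calc ∑ f : α → β, #(image f univ)
      = ∑ f : α → β, #(univ.bipartiteAbove (fun f y => y ∈ image f univ) f) := by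
        simp [bipartiteAbove]
    _ = ∑ y : β, #{f : α → β | y ∈ image f univ} :=
        sum_card_bipartiteAbove_eq_sum_card_bipartiteBelow _
    _ = _ := by simp only [card_filter_mem_image, sum_const, card_univ, smul_eq_mul]

end

/-- Birthday-paradox count of distinct values: summing the image cardinality over
all functions `f : Fin M → Fin N` gives `N * (N^M - (N-1)^M)`; equivalently, the
expected number of distinct values of `M` i.i.d. uniform draws from `N` values is
`N * (1 - ((N-1)/N)^M)`. -/
theorem expected_distinct_values (N M : ℕ) (hN : 0 < N) :
    (∑ f : Fin M → Fin N, (Finset.image f Finset.univ).card)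
      = N * (N ^ M - (N - 1) ^ M) ∧
    (∑ f : Fin M → Fin N, ((Finset.image f Finset.univ).card : ℝ)) / (N : ℝ) ^ M
      = (N : ℝ) * (1 - (((N : ℝ) - 1) / N) ^ M) := by
  have hsum : ∑ f : Fin M → Fin N, #(image f univ) = N * (N ^ M - (N - 1) ^ M) := by
    simpa using sum_card_image_univ (α := Fin M) (β := Fin N)
  refine ⟨hsum, ?_⟩
  rw [← Nat.cast_sum, hsum, Nat.cast_mul, Nat.cast_sub (Nat.pow_le_pow_left (Nat.sub_le N 1) M),
    Nat.cast_pow, Nat.cast_pow, Nat.cast_sub hN, Nat.cast_one, div_pow]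
  field_simp
end

section
/- Let L, M, and i be natural numbers with i < L. Then the number of functions f : Fin M → Fin (2^L) such that for every j, either f j = 0 or the 2-adic valuation padicValNat 2 (f j).val ≠ i, equals (2^L - 2^(L-1-i))^M. Consequently, if M values are hashed independently and uniformly into [0, 2^L - 1], the probability that bit i of the BITMAP remains 0 (no hash value has its least significant set bit at position i) is (1 - 1/2^(i+1))^M. -/
open scoped Classical

lemma val_eq_iff (i n : ℕ) (hn : n ≠ 0) :
    padicValNat 2 n = i ↔ ∃ k, n = 2 ^ (i+1) * k + 2 ^ i := by
  constructor
  · intro h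
    have hd : 2 ^ i ∣ n := h ▸ pow_padicValNat_dvd
    obtain ⟨m, hm⟩ := hd
    have hm0 : m ≠ 0 := by rintro rfl; simp at hm; exact hn hm
    have hodd : ¬ 2 ∣ m := by
      intro hdvd
      have : padicValNat 2 n = i + padicValNat 2 m := by
        rw [hm, padicValNat.mul (by positivity) hm0, padicValNat.prime_pow]
      have hmv : 1 ≤ padicValNat 2 m := one_le_padicValNat_of_dvd hm0 hdvd
      omega
    obtain ⟨k, hk⟩ := (Nat.odd_iff.mpr (Nat.two_dvd_ne_zero.mp hodd)) 
    refine ⟨k, ?_⟩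
    subst hm hk; ring
  · rintro ⟨k, rfl⟩
    have : 2 ^ (i+1) * k + 2 ^ i = 2 ^ i * (2 * k + 1) := by ring
    rw [this, padicValNat.mul (by positivity) (by omega), padicValNat.prime_pow,
      padicValNat.eq_zero_of_not_dvd (by omega)]
    omega

lemma count_bad (L i : ℕ) (hi : i < L) :
    ((Finset.range (2 ^ L)).filter
      (fun n => ¬(n = 0 ∨ padicValNat 2 n ≠ i))).card = 2 ^ (L - 1 - i) := by
  rw [show (2 : ℕ) ^ (L-1-i) = (Finset.range (2 ^ (L-1-i))).card from (Finset.card_range _).symm]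
  refine Finset.card_nbij' (fun n => n / 2 ^ (i+1)) (fun k => 2 ^ (i+1) * k + 2 ^ i) ?_ ?_ ?_ ?_
  · intro n hn
    simp only [Finset.mem_coe, Finset.mem_filter, Finset.mem_range, not_or, not_not] at hn
    obtain ⟨hlt, hn0, hv⟩ := hn
    rw [Finset.mem_coe, Finset.mem_range]
    have hL : 2 ^ L = 2 ^ (i+1) * 2 ^ (L-1-i) := by
      rw [← pow_add]; congr 1; omega
    exact Nat.div_lt_of_lt_mul (by omega)
  · intro k hk
    rw [Finset.mem_coe, Finset.mem_range] at hk
    simp only [Finset.mem_coe, Finset.mem_filter, Finset.mem_range, not_or, not_not]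
    have hL : 2 ^ L = 2 ^ (i+1) * 2 ^ (L-1-i) := by
      rw [← pow_add]; congr 1; omega
    refine ⟨?_, by positivity, (val_eq_iff i _ (by positivity)).mpr ⟨k, rfl⟩⟩
    have h1 : 2 ^ (i+1) * (k+1) ≤ 2 ^ (i+1) * 2 ^ (L-1-i) := Nat.mul_le_mul_left _ (by omega)
    have h3 : 2 ^ (i+1) * (k+1) = 2 ^ (i+1) * k + 2 ^ (i+1) := by ring
    have h2 : (2:ℕ) ^ i < 2 ^ (i+1) := Nat.pow_lt_pow_right (by norm_num) (by omega)
    omega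
  · intro n hn
    simp only [Finset.mem_coe, Finset.mem_filter, Finset.mem_range, not_or, not_not] at hn
    obtain ⟨hlt, hn0, hv⟩ := hn
    obtain ⟨k, rfl⟩ := (val_eq_iff i n hn0).mp hv
    have h2 : (2:ℕ) ^ i < 2 ^ (i+1) := Nat.pow_lt_pow_right (by norm_num) (by omega)
    show 2 ^ (i+1) * ((2 ^ (i+1) * k + 2 ^ i) / 2 ^ (i+1)) + 2 ^ i = _
    rw [Nat.mul_add_div (by positivity : (0:ℕ) < 2 ^ (i+1)), Nat.div_eq_of_lt h2]; ring
  · intro k hk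
    have h2 : (2:ℕ) ^ i < 2 ^ (i+1) := Nat.pow_lt_pow_right (by norm_num) (by omega)
    show (2 ^ (i+1) * k + 2 ^ i) / 2 ^ (i+1) = k
    rw [Nat.mul_add_div (by positivity : (0:ℕ) < 2 ^ (i+1)), Nat.div_eq_of_lt h2]; ring

lemma prob_part (L M i : ℕ) (hi : i < L) :
    ((((2 ^ L - 2 ^ (L - 1 - i)) ^ M : ℕ) : ℝ)) / ((2 : ℝ) ^ L) ^ M
      = (1 - 1 / 2 ^ (i + 1)) ^ M := by
  have hle : 2 ^ (L - 1 - i) ≤ 2 ^ L := Nat.pow_le_pow_right (by norm_num) (by omega)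
  have key : ((2:ℝ)^L - 2^(L-1-i)) / 2^L = 1 - 1/2^(i+1) := by
    have hL : (2:ℝ)^L = 2^(i+1) * 2^(L-1-i) := by rw [← pow_add]; congr 1; omega
    rw [hL]; field_simp
  push_cast [hle]
  rw [← div_pow, key]

/-- The number of functions `f : Fin M → Fin (2^L)` such that no value has its
least significant set bit at position `i < L` is `(2^L - 2^(L-1-i))^M`;
consequently the probability that BITMAP bit `i` remains `0` after `M`
independent uniform hashes is `(1 - 1/2^(i+1))^M`. -/
theorem bitmap_bit_stays_zero (L M i : ℕ) (hi : i < L) :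
    (Finset.univ.filter
        (fun f : Fin M → Fin (2 ^ L) =>
          ∀ j, f j = 0 ∨ padicValNat 2 (f j).val ≠ i)).card
      = (2 ^ L - 2 ^ (L - 1 - i)) ^ M ∧
    (((Finset.univ.filter
        (fun f : Fin M → Fin (2 ^ L) =>
          ∀ j, f j = 0 ∨ padicValNat 2 (f j).val ≠ i)).card : ℝ)
      / ((2 : ℝ) ^ L) ^ M) = (1 - 1 / 2 ^ (i + 1)) ^ M := by
  have hpos : 0 < 2 ^ L := Nat.pow_pos (by norm_num)
  set P : Fin (2 ^ L) → Prop := fun x => x = 0 ∨ padicValNat 2 x.val ≠ i with hP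
  -- count of single-coordinate bad set
  have hbadfin : (Finset.univ.filter (fun x : Fin (2 ^ L) => ¬ P x)).card
      = ((Finset.range (2 ^ L)).filter (fun n => ¬(n = 0 ∨ padicValNat 2 n ≠ i))).card := by
    refine Finset.card_nbij' (fun x => x.val) (fun n => ⟨n % 2 ^ L, Nat.mod_lt _ hpos⟩)
      ?_ ?_ ?_ ?_
    · intro x hx
      simp only [hP, Finset.mem_coe, Finset.mem_filter, Finset.mem_univ, true_and] at hx
      simp only [Finset.mem_coe, Finset.mem_filter, Finset.mem_range, Fin.is_lt, true_and]
      intro h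
      exact hx (h.imp (fun h0 => by ext; simp [h0]) id)
    · intro n hn
      simp only [Finset.mem_coe, Finset.mem_filter, Finset.mem_range] at hn
      simp only [hP, Finset.mem_coe, Finset.mem_filter, Finset.mem_univ, true_and]
      simp only [not_or, not_not] at hn
      have hmod : n % 2 ^ L = n := Nat.mod_eq_of_lt hn.1
      rintro (h0 | hne)
      · exact hn.2.1 (by simpa [Fin.ext_iff, hmod] using h0)
      · exact hne (by rw [hmod]; exact hn.2.2)
    · intro x _; ext; simp [Nat.mod_eq_of_lt x.is_lt]
    · intro n hn
      simp only [Finset.mem_coe, Finset.mem_filter, Finset.mem_range] at hn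
      simp [Nat.mod_eq_of_lt hn.1]
  have hone : Fintype.card {x : Fin (2 ^ L) // P x} = 2 ^ L - 2 ^ (L - 1 - i) := by
    rw [Fintype.card_subtype]
    have hsum : (Finset.univ.filter (fun x => P x)).card
        + (Finset.univ.filter (fun x => ¬ P x)).card = 2 ^ L := by
      rw [Finset.card_filter_add_card_filter_not, Finset.card_univ, Fintype.card_fin]
    have hc := count_bad L i hi
    have hle : 2 ^ (L - 1 - i) ≤ 2 ^ L := Nat.pow_le_pow_right (by norm_num) (by omega)
    omega
  have h1 : (Finset.univ.filter
        (fun f : Fin M → Fin (2 ^ L) =>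
          ∀ j, f j = 0 ∨ padicValNat 2 (f j).val ≠ i)).card
      = (2 ^ L - 2 ^ (L - 1 - i)) ^ M := by
    have hcs := Fintype.card_subtype (fun f : Fin M → Fin (2 ^ L) =>
      ∀ j, f j = 0 ∨ padicValNat 2 (f j).val ≠ i)
    rw [← hcs]
    have e : {f : Fin M → Fin (2 ^ L) // ∀ j, P (f j)} ≃ (Fin M → {x : Fin (2 ^ L) // P x}) :=
      Equiv.subtypePiEquivPi
    rw [Fintype.card_congr e, Fintype.card_fun, hone, Fintype.card_fin]
  exact ⟨h1, by rw [h1]; exact prob_part L M i hi⟩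
end

section
/- Let L, M, and i be natural numbers with i < L. Then the sum, over all functions f : Fin M → Fin (2^L), of the cardinality of {j : Fin M | (f j).val ≠ 0 and padicValNat 2 (f j).val = i} equals M * 2^(L-1-i) * (2^L)^(M-1). Consequently, if M values are hashed independently and uniformly into [0, 2^L - 1], the expected number of hash values whose least significant set bit is at position i equals M / 2^(i+1). -/
/-!
Swapping the sum over hash functions with the sum over records, each record contributes
`(2^L)^(M-1)` times the number of nonzero `x < 2^L` whose 2-adic valuation is `i`. These are exactly
the `x ≡ 2^i [MOD 2^(i+1)]`, and since `2^(i+1) ∣ 2^L` there are `2^L / 2^(i+1)` of them.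
-/

open Finset

theorem Nat.ne_zero_and_padicValNat_eq_iff {p n i : ℕ} (hp : p ≠ 1) :
    n ≠ 0 ∧ padicValNat p n = i ↔ p ^ i ∣ n ∧ ¬p ^ (i + 1) ∣ n := by
  rw [padicValNat_dvd_iff_of_ne_one hp, padicValNat_dvd_iff_of_ne_one hp]
  omega

theorem Nat.two_pow_dvd_and_not_two_pow_succ_dvd_iff_modEq {n i : ℕ} :
    2 ^ i ∣ n ∧ ¬2 ^ (i + 1) ∣ n ↔ n ≡ 2 ^ i [MOD 2 ^ (i + 1)] := by
  rw [Nat.ModEq, Nat.mod_eq_of_lt (Nat.pow_lt_pow_succ one_lt_two), pow_succ]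
  constructor
  · rintro ⟨⟨m, rfl⟩, hm⟩
    have hm_odd : m % 2 = 1 := by
      rw [Nat.mul_dvd_mul_iff_left (by positivity)] at hm
      omega
    rw [Nat.mul_mod_mul_left, hm_odd, mul_one]
  · intro h
    refine ⟨(Nat.dvd_mod_iff (dvd_mul_right _ _)).mp (by rw [h]), fun hdvd => ?_⟩
    rw [Nat.mod_eq_zero_of_dvd hdvd] at h
    exact pow_ne_zero i two_ne_zero h.symm

theorem Nat.ne_zero_and_padicValNat_two_eq_iff_modEq {n i : ℕ} :
    n ≠ 0 ∧ padicValNat 2 n = i ↔ n ≡ 2 ^ i [MOD 2 ^ (i + 1)] :=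
  (ne_zero_and_padicValNat_eq_iff (by norm_num)).trans
    two_pow_dvd_and_not_two_pow_succ_dvd_iff_modEq

theorem Fin.card_filter_val_eq_count (n : ℕ) (p : ℕ → Prop) [DecidablePred p] :
    #{x : Fin n | p x} = Nat.count p n := by
  rw [Nat.count_eq_card_filter_range, ← Nat.Iio_eq_range, ← Fin.map_valEmbedding_univ,
    filter_map, card_map]
  rfl

theorem card_filter_padicValNat_two_eq {L i : ℕ} (hi : i < L) :
    #{x : Fin (2 ^ L) | x.val ≠ 0 ∧ padicValNat 2 x.val = i} = 2 ^ (L - 1 - i) := by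
  have hdvd : 2 ^ (i + 1) ∣ 2 ^ L := Nat.pow_dvd_pow 2 hi
  simp only [Nat.ne_zero_and_padicValNat_two_eq_iff_modEq]
  rw [Fin.card_filter_val_eq_count _ (· ≡ 2 ^ i [MOD 2 ^ (i + 1)]), Nat.count_modEq_card _ (by positivity),
    Nat.mod_eq_zero_of_dvd hdvd, Nat.pow_div hi two_pos]
  simp only [Nat.not_lt_zero, if_false, add_zero]
  congr 1
  omega

theorem Fintype.sum_card_filter_apply {ι α : Type*} [Fintype ι] [DecidableEq ι] [Fintype α]
    (p : α → Prop) [DecidablePred p] :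
    ∑ f : ι → α, #{j | p (f j)} = card ι * #{a | p a} * card α ^ (card ι - 1) := by
  simp only [card_filter]
  rw [sum_comm, ← piFinset_univ]
  simp only [sum_piFinset_apply (fun a => if p a then 1 else 0), card_univ, sum_const,
    smul_eq_mul]
  ring

theorem Fintype.sum_card_filter_apply_div {ι α : Type*} [Fintype ι] [DecidableEq ι] [Fintype α]
    (p : α → Prop) [DecidablePred p] :
    (∑ f : ι → α, (#{j | p (f j)} : ℝ)) / (card α : ℝ) ^ card ι
      = card ι * (#{a | p a} / card α) := by
  rw [← Nat.cast_sum, sum_card_filter_apply]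
  push_cast
  rcases Nat.eq_zero_or_pos (card ι) with hι | hι
  · simp [hι]
  rcases eq_or_ne (card α : ℝ) 0 with hα | hα
  · simp [hα, hι.ne']
  rw [← Nat.sub_add_cancel hι, pow_succ, Nat.add_sub_cancel]
  field_simp

/-- Summed over all functions `f : Fin M → Fin (2^L)`, the number of indices `j`
whose hash value has its least significant set bit at position `i < L` is
`M * 2^(L-1-i) * (2^L)^(M-1)`; consequently the expected number of hash values
with LSSB at position `i` is `M / 2^(i+1)`. -/
theorem expected_lssb_hits (L M i : ℕ) (hi : i < L) :
    (∑ f : Fin M → Fin (2 ^ L),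
        (Finset.univ.filter
          (fun j : Fin M => (f j).val ≠ 0 ∧ padicValNat 2 (f j).val = i)).card)
      = M * 2 ^ (L - 1 - i) * (2 ^ L) ^ (M - 1) ∧
    ((∑ f : Fin M → Fin (2 ^ L),
        ((Finset.univ.filter
          (fun j : Fin M => (f j).val ≠ 0 ∧ padicValNat 2 (f j).val = i)).card : ℝ))
      / ((2 : ℝ) ^ L) ^ M) = (M : ℝ) / 2 ^ (i + 1) := by
  have hcount := card_filter_padicValNat_two_eq hi
  constructor
  · have h := Fintype.sum_card_filter_apply (ι := Fin M)
      (fun x : Fin (2 ^ L) => x.val ≠ 0 ∧ padicValNat 2 x.val = i)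
    rwa [hcount, Fintype.card_fin, Fintype.card_fin] at h
  · have hsplit : (2 : ℝ) ^ L = 2 ^ (L - 1 - i) * 2 ^ (i + 1) := by
      rw [← pow_add]
      congr 1
      omega
    have h := Fintype.sum_card_filter_apply_div (ι := Fin M)
      (fun x : Fin (2 ^ L) => x.val ≠ 0 ∧ padicValNat 2 x.val = i)
    simp only [Fintype.card_fin, hcount, Nat.cast_pow, Nat.cast_ofNat] at h
    rw [h, hsplit, div_mul_cancel_left₀ (by positivity), div_eq_mul_inv]
end

section
/- Let L, M, and i be natural numbers with i < L and M ≥ 1. Then the number of functions f : Fin M → Fin (2^L) such that there exists j with (f j).val ≠ 0 and padicValNat 2 (f j).val = i equals (2^L)^M - (2^L - 2^(L-1-i))^M, and this quantity is at most M * 2^(L-1-i) * (2^L)^(M-1). Consequently, the probability that BITMAP bit i gets set by M independent uniform hash values is 1 - (1 - 1/2^(i+1))^M ≤ M / 2^(i+1). -/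
open scoped Classical

lemma v2_char (i x : ℕ) : (x ≠ 0 ∧ padicValNat 2 x = i) ↔ x % 2 ^ (i + 1) = 2 ^ i := by
  constructor
  · rintro ⟨hx, hv⟩
    obtain ⟨c, hc⟩ := pow_padicValNat_dvd (p := 2) (n := x)
    rw [hv] at hc
    have hcodd : c % 2 = 1 := by
      rcases Nat.mod_two_eq_zero_or_one c with h | h
      · exfalso
        obtain ⟨d, hd⟩ := Nat.dvd_of_mod_eq_zero h
        have hdvd : 2 ^ (i + 1) ∣ x :=
          ⟨d, by rw [hc, hd, pow_succ]; ring⟩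
        rw [(Nat.prime_two.pow_dvd_iff_le_factorization hx),
          Nat.factorization_def _ Nat.prime_two, hv] at hdvd
        omega
      · exact h
    rw [hc, pow_succ, Nat.mul_mod_mul_left, hcodd, mul_one]
  · intro h
    have hx : x ≠ 0 := by
      intro h0
      rw [h0, Nat.zero_mod] at h
      exact absurd h.symm (pow_ne_zero _ two_ne_zero)
    have hq : x = 2 ^ i * (2 * (x / 2 ^ (i + 1)) + 1) := by
      conv_lhs => rw [← Nat.div_add_mod x (2 ^ (i + 1))]
      rw [h, pow_succ]
      ring
    refine ⟨hx, ?_⟩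
    rw [hq, padicValNat.mul (pow_ne_zero _ two_ne_zero) (by omega),
      padicValNat.prime_pow, padicValNat.eq_zero_of_not_dvd (by omega), add_zero]

lemma count_single (L i : ℕ) (hi : i < L) :
    (Finset.univ.filter
      (fun x : Fin (2 ^ L) => x.val ≠ 0 ∧ padicValNat 2 x.val = i)).card
      = 2 ^ (L - 1 - i) := by
  have hL : i + 1 ≤ L := hi
  have hpow : 2 ^ (i + 1) * 2 ^ (L - 1 - i) = 2 ^ L := by
    rw [← pow_add]; congr 1; omega
  have hmap : ∀ m : Fin (2 ^ (L - 1 - i)), 2 ^ (i + 1) * m.val + 2 ^ i < 2 ^ L := by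
    intro m
    have hm := m.isLt
    have h1 : 2 ^ i < 2 ^ (i + 1) := Nat.pow_lt_pow_right one_lt_two (Nat.lt_succ_self i)
    calc 2 ^ (i + 1) * m.val + 2 ^ i < 2 ^ (i + 1) * (m.val + 1) := by nlinarith
      _ ≤ 2 ^ (i + 1) * 2 ^ (L - 1 - i) := Nat.mul_le_mul_left _ (by omega)
      _ = 2 ^ L := hpow
  set F : Fin (2 ^ (L - 1 - i)) → Fin (2 ^ L) := fun m => ⟨2 ^ (i + 1) * m.val + 2 ^ i, hmap m⟩
  have hset : (Finset.univ.filter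
      (fun x : Fin (2 ^ L) => x.val ≠ 0 ∧ padicValNat 2 x.val = i))
      = Finset.univ.image F := by
    ext x
    simp only [Finset.mem_filter, Finset.mem_univ, true_and, Finset.mem_image]
    rw [v2_char]
    constructor
    · intro h
      have hlt : x.val / 2 ^ (i + 1) < 2 ^ (L - 1 - i) :=
        Nat.div_lt_of_lt_mul (by rw [hpow]; exact x.isLt)
      refine ⟨⟨x.val / 2 ^ (i + 1), hlt⟩, ?_⟩
      apply Fin.ext
      show 2 ^ (i + 1) * (x.val / 2 ^ (i + 1)) + 2 ^ i = x.val
      conv_rhs => rw [← Nat.div_add_mod x.val (2 ^ (i + 1))]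
      rw [h]
    · rintro ⟨m, rfl⟩
      show (2 ^ (i + 1) * m.val + 2 ^ i) % 2 ^ (i + 1) = 2 ^ i
      rw [Nat.mul_add_mod]
      exact Nat.mod_eq_of_lt (Nat.pow_lt_pow_right one_lt_two (Nat.lt_succ_self i))
  have hinj : Function.Injective F := by
    intro m m' h
    have := congrArg Fin.val h
    simp only [F] at this
    have h2 : (0:ℕ) < 2 ^ (i + 1) := Nat.pow_pos (by norm_num)
    apply Fin.ext
    exact Nat.eq_of_mul_eq_mul_left h2 (by omega)
  rw [hset, Finset.card_image_of_injective _ hinj, Finset.card_univ, Fintype.card_fin]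

/-- The number of functions `f : Fin M → Fin (2^L)` for which some value has its
least significant set bit at position `i < L` is `(2^L)^M - (2^L - 2^(L-1-i))^M`,
and this is at most `M * 2^(L-1-i) * (2^L)^(M-1)` (union bound); consequently the
probability that BITMAP bit `i` gets set is `1 - (1 - 1/2^(i+1))^M ≤ M/2^(i+1)`. -/
theorem bitmap_bit_set_union_bound (L M i : ℕ) (hi : i < L) (hM : 1 ≤ M) :
    (Finset.univ.filter
        (fun f : Fin M → Fin (2 ^ L) =>
          ∃ j, (f j).val ≠ 0 ∧ padicValNat 2 (f j).val = i)).card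
      = (2 ^ L) ^ M - (2 ^ L - 2 ^ (L - 1 - i)) ^ M ∧
    (Finset.univ.filter
        (fun f : Fin M → Fin (2 ^ L) =>
          ∃ j, (f j).val ≠ 0 ∧ padicValNat 2 (f j).val = i)).card
      ≤ M * 2 ^ (L - 1 - i) * (2 ^ L) ^ (M - 1) ∧
    (((Finset.univ.filter
        (fun f : Fin M → Fin (2 ^ L) =>
          ∃ j, (f j).val ≠ 0 ∧ padicValNat 2 (f j).val = i)).card : ℝ)
      / ((2 : ℝ) ^ L) ^ M) = 1 - (1 - 1 / 2 ^ (i + 1)) ^ M ∧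
    1 - (1 - 1 / (2 : ℝ) ^ (i + 1)) ^ M ≤ (M : ℝ) / 2 ^ (i + 1) := by
  have hL : i + 1 ≤ L := hi
  set a := 2 ^ (L - 1 - i) with ha_def
  set N := 2 ^ L with hN_def
  have haN : 2 ^ (i + 1) * a = N := by rw [ha_def, hN_def, ← pow_add]; congr 1; omega
  have ha_pos : 0 < a := Nat.pow_pos (by norm_num)
  have haleN : a ≤ N := by nlinarith [Nat.one_le_two_pow (n := i + 1)]
  -- complement count
  have hcompl : (Finset.univ.filter
      (fun f : Fin M → Fin (2 ^ L) =>
        ∀ j, ¬((f j).val ≠ 0 ∧ padicValNat 2 (f j).val = i))).card = (N - a) ^ M := by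
    have heq : (Finset.univ.filter
        (fun f : Fin M → Fin (2 ^ L) =>
          ∀ j, ¬((f j).val ≠ 0 ∧ padicValNat 2 (f j).val = i)))
        = Fintype.piFinset (fun _ : Fin M => Finset.univ.filter
            (fun x : Fin (2 ^ L) => ¬(x.val ≠ 0 ∧ padicValNat 2 x.val = i))) := by
      ext f
      simp [Fintype.mem_piFinset]
    rw [heq, Fintype.card_piFinset]
    have hcard : (Finset.univ.filter
        (fun x : Fin (2 ^ L) => ¬(x.val ≠ 0 ∧ padicValNat 2 x.val = i))).card = N - a := by
      have hsum := Finset.card_filter_add_card_filter_not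
        (s := (Finset.univ : Finset (Fin (2 ^ L))))
        (p := fun x : Fin (2 ^ L) => x.val ≠ 0 ∧ padicValNat 2 x.val = i)
      rw [count_single L i hi, Finset.card_univ, Fintype.card_fin] at hsum
      omega
    simp only [hcard, Finset.prod_const, Finset.card_univ, Fintype.card_fin]
  have hmain : (Finset.univ.filter
      (fun f : Fin M → Fin (2 ^ L) =>
        ∃ j, (f j).val ≠ 0 ∧ padicValNat 2 (f j).val = i)).card = N ^ M - (N - a) ^ M := by
    have hsum := Finset.card_filter_add_card_filter_not
      (s := (Finset.univ : Finset (Fin M → Fin (2 ^ L))))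
      (p := fun f : Fin M → Fin (2 ^ L) => ∃ j, (f j).val ≠ 0 ∧ padicValNat 2 (f j).val = i)
    have hneg : (Finset.univ.filter
        (fun f : Fin M → Fin (2 ^ L) =>
          ¬∃ j, (f j).val ≠ 0 ∧ padicValNat 2 (f j).val = i)).card = (N - a) ^ M := by
      rw [← hcompl]
      congr 1
      ext f
      simp
    have htotal : (Finset.univ : Finset (Fin M → Fin (2 ^ L))).card = N ^ M := by
      simp [Fintype.card_fun, hN_def]
    rw [← htotal, ← hsum, hneg, Nat.add_sub_cancel]
  -- real facts
  have h2pos : (0:ℝ) < 2 ^ (i + 1) := by positivity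
  have hNR_pos : (0:ℝ) < (N:ℝ) := by
    rw [hN_def]; push_cast; positivity
  have haNR : (2:ℝ) ^ (i + 1) * (a:ℝ) = (N:ℝ) := by
    rw [← haN]; push_cast; ring
  have hfrac : ((N:ℝ) - (a:ℝ)) / (N:ℝ) = 1 - 1 / 2 ^ (i + 1) := by
    rw [sub_div, div_self (ne_of_gt hNR_pos)]
    congr 1
    rw [div_eq_div_iff (ne_of_gt hNR_pos) (ne_of_gt h2pos)]
    linarith [haNR]
  have hcast : ((Finset.univ.filter
      (fun f : Fin M → Fin (2 ^ L) =>
        ∃ j, (f j).val ≠ 0 ∧ padicValNat 2 (f j).val = i)).card : ℝ)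
      = (N:ℝ) ^ M - ((N:ℝ) - (a:ℝ)) ^ M := by
    rw [hmain]
    have hle : (N - a) ^ M ≤ N ^ M := Nat.pow_le_pow_left (Nat.sub_le _ _) _
    push_cast [Nat.cast_sub hle, Nat.cast_sub haleN]
    ring
  have hprob : (((Finset.univ.filter
      (fun f : Fin M → Fin (2 ^ L) =>
        ∃ j, (f j).val ≠ 0 ∧ padicValNat 2 (f j).val = i)).card : ℝ)
      / ((2 : ℝ) ^ L) ^ M) = 1 - (1 - 1 / 2 ^ (i + 1)) ^ M := by
    have h2L : ((2:ℝ) ^ L) = (N:ℝ) := by rw [hN_def]; push_cast; ring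
    rw [hcast, h2L, sub_div, div_self (pow_ne_zero _ (ne_of_gt hNR_pos)), ← div_pow, hfrac]
  -- Bernoulli
  have hbern : 1 - 1 / (2:ℝ) ^ (i + 1) * M ≤ (1 - 1 / (2:ℝ) ^ (i + 1)) ^ M := by
    have ht1 : (1:ℝ) / 2 ^ (i + 1) ≤ 1 := by
      rw [div_le_one h2pos]
      exact one_le_pow₀ (by norm_num)
    have := one_add_mul_le_pow (a := -(1 / (2:ℝ) ^ (i + 1))) (by linarith) M
    calc 1 - 1 / (2:ℝ) ^ (i + 1) * M = 1 + (M:ℝ) * (-(1 / 2 ^ (i + 1))) := by ring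
      _ ≤ (1 + -(1 / (2:ℝ) ^ (i + 1))) ^ M := this
      _ = (1 - 1 / (2:ℝ) ^ (i + 1)) ^ M := by ring_nf
  have hlast : 1 - (1 - 1 / (2 : ℝ) ^ (i + 1)) ^ M ≤ (M : ℝ) / 2 ^ (i + 1) := by
    have h : (M:ℝ) / 2 ^ (i + 1) = 1 / 2 ^ (i + 1) * M := by ring
    rw [h]
    linarith [hbern]
  refine ⟨hmain, ?_, hprob, hlast⟩
  -- union bound in ℕ via reals
  have hM' : M - 1 + 1 = M := Nat.succ_pred_eq_of_pos hM
  rw [← Nat.cast_le (α := ℝ)]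
  rw [hcast]
  have hNpowpos : (0:ℝ) < (N:ℝ) ^ M := by positivity
  have key : (N:ℝ) ^ M - ((N:ℝ) - (a:ℝ)) ^ M
      ≤ (N:ℝ) ^ M * ((M:ℝ) / 2 ^ (i + 1)) := by
    have h1 : ((N:ℝ) - (a:ℝ)) ^ M = (N:ℝ) ^ M * (((N:ℝ) - (a:ℝ)) / (N:ℝ)) ^ M := by
      rw [div_pow]
      field_simp
    rw [h1, hfrac]
    have h2 : 1 - (1 - 1 / (2:ℝ) ^ (i + 1)) ^ M ≤ (M:ℝ) / 2 ^ (i + 1) := hlast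
    nlinarith [pow_nonneg (le_of_lt hNR_pos) M]
  have hrhs : (N:ℝ) ^ M * ((M:ℝ) / 2 ^ (i + 1)) = (M:ℝ) * (a:ℝ) * (N:ℝ) ^ (M - 1) := by
    conv_lhs => rw [← hM', pow_succ]
    rw [← haNR]
    field_simp
    ring_nf
    rw [Nat.add_comm 1 (M - 1), hM']
  push_cast
  calc (N:ℝ) ^ M - ((N:ℝ) - (a:ℝ)) ^ M ≤ (N:ℝ) ^ M * ((M:ℝ) / 2 ^ (i + 1)) := key
    _ = (M:ℝ) * (a:ℝ) * (N:ℝ) ^ (M - 1) := hrhs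
end

section
/- Let L and k be natural numbers with k < L. Then Real.log (1 - 2^(k - L : ℝ)) / Real.log (1 - 1/2^L) ≥ 2^k. That is, the collision-included probabilistic counting estimate M̃_CIPC = log_{1 - 2^{-L}}(1 - 2^{k-L}) is at least the raw estimate 2^k. -/
open Real

theorem nat_le_log_one_sub_mul_div_log_one_sub {x : ℝ} (hx₀ : 0 < x) (hx₁ : x < 1) {n : ℕ}
    (hnx : n * x < 1) : (n : ℝ) ≤ log (1 - n * x) / log (1 - x) := by
  have hbernoulli : 1 - n * x ≤ (1 - x) ^ n := by
    simpa [sub_eq_add_neg] using one_add_mul_le_pow (a := -x) (by linarith) n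
  rw [le_div_iff_of_neg (log_neg (by linarith) (by linarith)), ← log_pow]
  exact log_le_log (by linarith) hbernoulli

/-- The collision-included probabilistic counting estimate
`log (1 - 2^(k-L)) / log (1 - 1/2^L)` is at least the raw estimate `2^k`. -/
theorem cipc_ge_raw (L k : ℕ) (hk : k < L) :
    Real.log (1 - (2 : ℝ) ^ ((k : ℝ) - (L : ℝ))) / Real.log (1 - 1 / 2 ^ L)
      ≥ 2 ^ k := by
  have hpowL : (0 : ℝ) < 2 ^ L := by positivity
  have hrpow : (2 : ℝ) ^ ((k : ℝ) - (L : ℝ)) = ((2 ^ k : ℕ) : ℝ) * (1 / 2 ^ L) := by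
    rw [rpow_sub_natCast two_ne_zero, rpow_natCast]
    push_cast
    ring
  have hx₁ : (1 : ℝ) / 2 ^ L < 1 := (div_lt_one hpowL).2 (one_lt_pow₀ one_lt_two (by omega))
  have hnx : ((2 ^ k : ℕ) : ℝ) * (1 / 2 ^ L) < 1 := by
    rw [← hrpow]
    exact rpow_lt_one_of_one_lt_of_neg one_lt_two (by rw [sub_neg]; exact_mod_cast hk)
  have hbound := nat_le_log_one_sub_mul_div_log_one_sub (by positivity) hx₁ hnx
  rw [← hrpow] at hbound
  exact_mod_cast hbound
end
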